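/- arXiv:2010.15897 — 2 statements merged into one kernel-verified Lean document; each statement's English description precedes it below -/
import Mathlib

section
/- In the symplectic setting, if a, b ∈ V satisfy B(a, b) = 0, then for every X ∈ gl(V)_B one has ⁅D_a, ⁅D_b, X⁆⁆ = B(a, X b)·D_{a,b}. -/
/-- The endomorphism `D_{a,b} : v ↦ B(v,b)·a + B(v,a)·b` of the symplectic setting. -/
def Dpair {k V : Type*} [Field k] [AddCommGroup V] [Module k V]
    (B : LinearMap.BilinForm k V) (a b : V) : Module.End k V :=
  (B.flip b).smulRight a + (B.flip a).smulRight b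

/-- The endomorphism `D_a : v ↦ B(v,a)·a` of the symplectic setting. -/
def Dsq {k V : Type*} [Field k] [AddCommGroup V] [Module k V]
    (B : LinearMap.BilinForm k V) (a : V) : Module.End k V :=
  (B.flip a).smulRight a

/-! Expanding `⁅D_b, X⁆ v = B(Xv,b)·b - B(v,b)·Xb` and then `⁅D_a, ·⁆`, the orthogonality
`B(a,b) = 0` kills every term except `-B(v,b)B(Xb,a)·a - B(v,a)B(Xa,b)·b`; skew-symmetry of `B`
and the symmetry `B(a,Xb) = B(b,Xa)` of `X` turn both coefficients into `B(a,Xb)`. -/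

section

variable {k V : Type*} [Field k] [AddCommGroup V] [Module k V] (B : LinearMap.BilinForm k V)

@[simp]
theorem Dpair_apply (a b v : V) : Dpair B a b v = B v b • a + B v a • b := rfl

@[simp]
theorem Dsq_apply (a v : V) : Dsq B a v = B v a • a := rfl

theorem lie_Dsq_apply (a : V) (Y : Module.End k V) (v : V) :
    ⁅Dsq B a, Y⁆ v = B (Y v) a • a - B v a • Y a := by
  simp [Ring.lie_def]

end

theorem stmt7_general {k V : Type*} [Field k] [AddCommGroup V] [Module k V]
    (B : LinearMap.BilinForm k V) (halt : ∀ v : V, B v v = 0)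
    (a b : V) (hab : B a b = 0) :
    ∀ X : Module.End k V, (∀ u v : V, B u (X v) = B v (X u)) →
      ⁅Dsq B a, ⁅Dsq B b, X⁆⁆ = B a (X b) • Dpair B a b := by
  intro X hX
  have hskew : ∀ x y : V, B x y = -B y x := fun x y =>
    (LinearMap.BilinForm.IsAlt.neg_eq halt y x).symm
  have hba : B b a = 0 := by rw [hskew, hab, neg_zero]
  have hXa : ⁅Dsq B b, X⁆ a = -B a (X b) • b := by
    rw [lie_Dsq_apply, hab, zero_smul, sub_zero, hskew, hX]
  have hXv : ∀ v, B (⁅Dsq B b, X⁆ v) a = B a (X b) * B v b := fun v => by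
    simp only [lie_Dsq_apply, map_sub, map_smul, LinearMap.sub_apply, LinearMap.smul_apply,
      smul_eq_mul, hba, hskew (X b) a]
    ring
  ext v
  rw [lie_Dsq_apply, hXa, hXv, LinearMap.smul_apply, Dpair_apply]
  module

/-- In the symplectic setting, if `B(a,b) = 0` then
`⁅D_a, ⁅D_b, X⁆⁆ = B(a, Xb)·D_{a,b}` for every `X ∈ gl(V)_B`. -/
theorem stmt7 {k V : Type*} [Field k] [AddCommGroup V] [Module k V]
    (hchar : (2 : k) ≠ 0)
    (B : LinearMap.BilinForm k V) (halt : ∀ v : V, B v v = 0)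
    (a b : V) (hab : B a b = 0) :
    ∀ X : Module.End k V, (∀ u v : V, B u (X v) = B v (X u)) →
      ⁅Dsq B a, ⁅Dsq B b, X⁆⁆ = B a (X b) • Dpair B a b :=
  stmt7_general B halt a b hab
end

section
/- In the symplectic setting, if a, b ∈ V satisfy B(a, b) = 0, then the k-linear span of D_a, D_b and D_{a+b} is an inner ideal of the Lie algebra gl(V)_B; that is, for all u, w in this span and all X ∈ gl(V)_B, the element ⁅u, ⁅w, X⁆⁆ again lies in the span of D_a, D_b and D_{a+b}. -/
/-!
`c ↦ D_c` is a quadratic map with polarization `D_{c,d} = D_{c+d} - D_c - D_d`, so the span of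
`D_a, D_b, D_{a+b}` contains `D_c` and `D_{c,d}` for all `c, d` in the plane `span {a, b}`, which
`B(a,b) = 0` makes totally isotropic. For `B(c,d) = 0` and `X ∈ gl(V)_B` one computes
`⁅D_c, ⁅D_d, X⁆⁆ = B(c, X d) • D_{c,d}`, and the double bracket is bilinear.
-/

theorem lie_lie_mem_of_mem_span {R L : Type*} [CommRing R] [LieRing L] [LieAlgebra R L]
    {s : Set L} {S : Submodule R L} (z : L) (h : ∀ x ∈ s, ∀ y ∈ s, ⁅x, ⁅y, z⁆⁆ ∈ S)
    {u w : L} (hu : u ∈ Submodule.span R s) (hw : w ∈ Submodule.span R s) :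
    ⁅u, ⁅w, z⁆⁆ ∈ S := by
  induction hu using Submodule.span_induction with
  | mem x hx =>
    induction hw using Submodule.span_induction with
    | mem y hy => exact h x hx y hy
    | zero => simp
    | add y₁ y₂ _ _ h₁ h₂ => simpa only [add_lie, lie_add] using S.add_mem h₁ h₂
    | smul t y _ hy => simpa only [smul_lie, lie_smul] using S.smul_mem t hy
  | zero => simp
  | add x₁ x₂ _ _ h₁ h₂ => simpa only [add_lie] using S.add_mem h₁ h₂
  | smul t x _ hx => simpa only [smul_lie] using S.smul_mem t hx

section Symplectic

variable {k V : Type*} [Field k] [AddCommGroup V] [Module k V] (B : LinearMap.BilinForm k V)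

theorem Dsq_add (c d : V) : Dsq B (c + d) = Dsq B c + Dsq B d + Dpair B c d := by
  ext v
  simp only [Dsq, Dpair, LinearMap.add_apply, LinearMap.smulRight_apply, map_add]
  module

theorem Dpair_eq_Dsq_add_sub (c d : V) : Dpair B c d = Dsq B (c + d) - Dsq B c - Dsq B d := by
  rw [Dsq_add]; abel

theorem Dsq_mem_span_of_mem_span_pair {a b c : V} (hc : c ∈ Submodule.span k {a, b}) :
    Dsq B c ∈ Submodule.span k {Dsq B a, Dsq B b, Dsq B (a + b)} := by
  obtain ⟨x, y, rfl⟩ := Submodule.mem_span_pair.mp hc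
  have hDsq : Dsq B (x • a + y • b) =
      (x ^ 2 - x * y) • Dsq B a + (y ^ 2 - x * y) • Dsq B b + (x * y) • Dsq B (a + b) := by
    ext v
    simp only [Dsq, LinearMap.add_apply, LinearMap.smul_apply, LinearMap.smulRight_apply,
      map_add, map_smul]
    module
  rw [Submodule.mem_span_triple]
  exact ⟨_, _, _, hDsq.symm⟩

theorem Dpair_mem_span_of_mem_span_pair {a b c d : V} (hc : c ∈ Submodule.span k {a, b})
    (hd : d ∈ Submodule.span k {a, b}) :
    Dpair B c d ∈ Submodule.span k {Dsq B a, Dsq B b, Dsq B (a + b)} := by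
  rw [Dpair_eq_Dsq_add_sub]
  exact sub_mem (sub_mem (Dsq_mem_span_of_mem_span_pair B (add_mem hc hd))
    (Dsq_mem_span_of_mem_span_pair B hc)) (Dsq_mem_span_of_mem_span_pair B hd)

variable {B}

theorem apply_eq_zero_of_mem_span_pair (hB : B.IsAlt) {a b : V} (hab : B a b = 0)
    {c d : V} (hc : c ∈ Submodule.span k {a, b}) (hd : d ∈ Submodule.span k {a, b}) :
    B c d = 0 := by
  have hba : B b a = 0 := hB.isRefl _ _ hab
  obtain ⟨x, y, rfl⟩ := Submodule.mem_span_pair.mp hc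
  obtain ⟨x', y', rfl⟩ := Submodule.mem_span_pair.mp hd
  simp [hB.self_eq_zero, hab, hba]

theorem lie_Dsq_lie_Dsq (hB : B.IsAlt) {X : Module.End k V}
    (hX : ∀ u v : V, B u (X v) = B v (X u)) {c d : V} (hcd : B c d = 0) :
    ⁅Dsq B c, ⁅Dsq B d, X⁆⁆ = B c (X d) • Dpair B c d := by
  have hdc : B d c = 0 := hB.isRefl _ _ hcd
  have hXdc : B (X d) c = -B c (X d) := (hB.neg_eq _ _).symm
  have hXcd : B (X c) d = -B c (X d) := by rw [← hB.neg_eq, hX]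
  ext v
  simp only [Ring.lie_def, Dsq, Dpair, LinearMap.sub_apply, Module.End.mul_apply,
    LinearMap.smulRight_apply, LinearMap.add_apply, LinearMap.smul_apply,
    LinearMap.BilinForm.flip_apply, map_sub, map_smul, hcd, hdc, hXdc, hXcd]
  module

end Symplectic

theorem stmt10_general {k V : Type*} [Field k] [AddCommGroup V] [Module k V]
    (B : LinearMap.BilinForm k V) (halt : ∀ v : V, B v v = 0)
    (a b : V) (hab : B a b = 0) :
    ∀ u ∈ Submodule.span k ({Dsq B a, Dsq B b, Dsq B (a + b)} : Set (Module.End k V)),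
      ∀ w ∈ Submodule.span k ({Dsq B a, Dsq B b, Dsq B (a + b)} : Set (Module.End k V)),
        ∀ X : Module.End k V, (∀ u' v' : V, B u' (X v') = B v' (X u')) →
          ⁅u, ⁅w, X⁆⁆ ∈
            Submodule.span k ({Dsq B a, Dsq B b, Dsq B (a + b)} : Set (Module.End k V)) := by
  intro u hu w hw X hX
  have hgen : ∀ x ∈ ({Dsq B a, Dsq B b, Dsq B (a + b)} : Set (Module.End k V)),
      ∃ c ∈ Submodule.span k {a, b}, x = Dsq B c := by
    rintro x (rfl | rfl | rfl)
    · exact ⟨a, Submodule.subset_span (by simp), rfl⟩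
    · exact ⟨b, Submodule.subset_span (by simp), rfl⟩
    · exact ⟨a + b, add_mem (Submodule.subset_span (by simp))
        (Submodule.subset_span (by simp)), rfl⟩
  -- the commutator Lie ring structure on `Module.End k V` is not a global instance
  let := LieRing.ofAssociativeRing (A := Module.End k V)
  refine lie_lie_mem_of_mem_span X (fun x hx y hy => ?_) hu hw
  obtain ⟨c, hc, rfl⟩ := hgen x hx
  obtain ⟨d, hd, rfl⟩ := hgen y hy
  rw [lie_Dsq_lie_Dsq halt hX (apply_eq_zero_of_mem_span_pair halt hab hc hd)]
  exact Submodule.smul_mem _ _ (Dpair_mem_span_of_mem_span_pair B hc hd)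

/-- In the symplectic setting, if `B(a,b) = 0`, then the span of `D_a`, `D_b` and
`D_{a+b}` is an inner ideal of `gl(V)_B`: for all `u, w` in this span and every
`X ∈ gl(V)_B`, the element `⁅u, ⁅w, X⁆⁆` again lies in the span. -/
theorem stmt10 {k V : Type*} [Field k] [AddCommGroup V] [Module k V]
    (hchar : (2 : k) ≠ 0)
    (B : LinearMap.BilinForm k V) (halt : ∀ v : V, B v v = 0)
    (a b : V) (hab : B a b = 0) :
    ∀ u ∈ Submodule.span k ({Dsq B a, Dsq B b, Dsq B (a + b)} : Set (Module.End k V)),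
      ∀ w ∈ Submodule.span k ({Dsq B a, Dsq B b, Dsq B (a + b)} : Set (Module.End k V)),
        ∀ X : Module.End k V, (∀ u' v' : V, B u' (X v') = B v' (X u')) →
          ⁅u, ⁅w, X⁆⁆ ∈
            Submodule.span k ({Dsq B a, Dsq B b, Dsq B (a + b)} : Set (Module.End k V)) :=
  stmt10_general B halt a b hab
end
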